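/- arXiv:1403.6990 — 3 statements merged into one kernel-verified Lean document; each statement's English description precedes it below -/
import Mathlib

section
/- Under the assumptions of the previous setting, if additionally $P(Y_{j+1} - Y_j \geq m \mid \mathcal{F}_j) \leq e^{-\beta m}$ almost surely for all $j$ and all natural numbers $m$, then $P(Y_I \geq m^2) \leq (m+1)e^{-\beta m}$ for all $m$, where $I = \inf\{i : Y_i = Y_{i+1}\}$ and $Y_I$ denotes the terminal (constant) value of the sequence. -/
/-!
If `Y` reaches `m ^ 2`, then either it increases at each of its first `m` steps, or one of
these steps is a jump of size at least `m`: otherwise it stalls at some step `j < m`, after which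
it is frozen at a value at most `j * (m - 1) < m ^ 2`. Multiplying the conditional bounds
`e ^ (-β)` along the filtration bounds the first event by `e ^ (-β m)`, and each of the `m`
jump events has probability at most `e ^ (-β m)`.
-/

open MeasureTheory

lemma measure_inter_le_of_condExp_indicator_le {Ω : Type*} {m m0 : MeasurableSpace Ω}
    (hm : m ≤ m0) {μ : Measure Ω} [IsFiniteMeasure μ] {S C : Set Ω} (hS : MeasurableSet S)
    (hC : MeasurableSet[m] C) {c : ℝ}
    (h : ∀ᵐ ω ∂μ, (μ[S.indicator (fun _ => (1 : ℝ)) | m]) ω ≤ c) :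
    μ (C ∩ S) ≤ ENNReal.ofReal c * μ C := by
  have hreal : μ.real (C ∩ S) ≤ μ.real C * c := calc
    μ.real (C ∩ S) = ∫ ω in C, S.indicator (fun _ => (1 : ℝ)) ω ∂μ := by
      rw [integral_indicator_const _ hS, smul_eq_mul, mul_one,
        measureReal_restrict_apply hS, Set.inter_comm]
    _ = ∫ ω in C, (μ[S.indicator (fun _ => (1 : ℝ)) | m]) ω ∂μ :=
      (setIntegral_condExp hm ((integrable_const 1).indicator hS) hC).symm
    _ ≤ ∫ _ in C, c ∂μ :=
      integral_mono_ae integrable_condExp.restrict (integrable_const c) (ae_restrict_of_ae h)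
    _ = μ.real C * c := by rw [setIntegral_const, smul_eq_mul]
  calc μ (C ∩ S) = ENNReal.ofReal (μ.real (C ∩ S)) :=
        (ofReal_measureReal (measure_ne_top μ _)).symm
    _ ≤ ENNReal.ofReal (μ.real C * c) := ENNReal.ofReal_le_ofReal hreal
    _ = ENNReal.ofReal c * μ C := by
      rw [ENNReal.ofReal_mul measureReal_nonneg, ofReal_measureReal (measure_ne_top μ C), mul_comm]

lemma measure_biInter_range_le_pow {Ω : Type*} {m0 : MeasurableSpace Ω} {μ : Measure Ω}
    [IsFiniteMeasure μ] (ℱ : Filtration ℕ m0) {S : ℕ → Set Ω}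
    (hS : ∀ j, MeasurableSet[ℱ (j + 1)] (S j)) {c : ℝ}
    (h : ∀ j, ∀ᵐ ω ∂μ, (μ[(S j).indicator (fun _ => (1 : ℝ)) | ℱ j]) ω ≤ c) (k : ℕ) :
    μ (⋂ j ∈ Finset.range k, S j) ≤ ENNReal.ofReal c ^ k * μ Set.univ := by
  induction k with
  | zero => simp
  | succ k ih =>
    have hprefix : MeasurableSet[ℱ k] (⋂ j ∈ Finset.range k, S j) :=
      Finset.measurableSet_biInter _ fun j hj =>
        ℱ.mono (Finset.mem_range.mp hj) _ (hS j)
    calc μ (⋂ j ∈ Finset.range (k + 1), S j) = μ ((⋂ j ∈ Finset.range k, S j) ∩ S k) := by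
          rw [Finset.range_add_one, Finset.set_biInter_insert, Set.inter_comm]
      _ ≤ ENNReal.ofReal c * μ (⋂ j ∈ Finset.range k, S j) :=
          measure_inter_le_of_condExp_indicator_le (ℱ.le k) (ℱ.le _ _ (hS k)) hprefix (h k)
      _ ≤ ENNReal.ofReal c * (ENNReal.ofReal c ^ k * μ Set.univ) := by gcongr
      _ = ENNReal.ofReal c ^ (k + 1) * μ Set.univ := by ring

lemma add_le_mul_of_forall_lt_add {y : ℕ → ℕ} (hy0 : y 0 = 0) {m n : ℕ}
    (hjump : ∀ k < n, y (k + 1) < y k + m) : y n + n ≤ n * m := by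
  induction n with
  | zero => simp [hy0]
  | succ n ih =>
    have hprev := ih fun k hk => hjump k (Nat.lt_succ_of_lt hk)
    have hlast := hjump n (Nat.lt_succ_self n)
    rw [Nat.succ_mul]
    omega

lemma le_of_eq_succ_of_stick {y : ℕ → ℕ} (hy : Monotone y)
    (hstick : ∀ i, y i = y (i + 1) → ∀ j, i ≤ j → y j = y (j + 1)) {j : ℕ}
    (hj : y j = y (j + 1)) (i : ℕ) : y i ≤ y j := by
  rcases le_or_gt i j with hij | hji
  · exact hy hij
  · have hconst : ∀ i, j ≤ i → y i = y j := fun i hi => by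
      induction i, hi using Nat.le_induction with
      | base => rfl
      | succ i hi ih => rw [← hstick j hj i hi, ih]
    exact (hconst i hji.le).le

lemma forall_lt_succ_or_exists_add_le_succ_of_sq_le {y : ℕ → ℕ} (hy0 : y 0 = 0)
    (hy : Monotone y) (hstick : ∀ i, y i = y (i + 1) → ∀ j, i ≤ j → y j = y (j + 1))
    {m i : ℕ} (hi : m ^ 2 ≤ y i) :
    (∀ j < m, y j < y (j + 1)) ∨ ∃ k < m, y k + m ≤ y (k + 1) := by
  refine or_iff_not_imp_right.2 fun hsmall j hjm => ?_
  push Not at hsmall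
  by_contra hstall
  have hj : y j = y (j + 1) := le_antisymm (hy j.le_succ) (not_lt.mp hstall)
  have hbound := add_le_mul_of_forall_lt_add hy0 fun k hk => hsmall k (hk.trans hjm)
  have hfrozen := le_of_eq_succ_of_stick hy hstick hj i
  nlinarith

theorem stmt1_general {Ω : Type*} {m0 : MeasurableSpace Ω} (P : Measure Ω) [IsProbabilityMeasure P]
    (ℱ : Filtration ℕ m0) (Y : ℕ → Ω → ℕ) (β : ℝ)
    (hadapt : ∀ i, Measurable[ℱ i] (Y i))
    (hY0 : ∀ ω, Y 0 ω = 0)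
    (hmono : ∀ i, ∀ᵐ ω ∂P, Y i ω ≤ Y (i + 1) ω)
    (hcond : ∀ i, ∀ᵐ ω ∂P,
      (P[Set.indicator {ω' | Y i ω' < Y (i + 1) ω'} (fun _ => (1 : ℝ)) | ℱ i]) ω
        ≤ Real.exp (-β))
    (htail : ∀ j m, ∀ᵐ ω ∂P,
      (P[Set.indicator {ω' | Y j ω' + m ≤ Y (j + 1) ω'} (fun _ => (1 : ℝ)) | ℱ j]) ω
        ≤ Real.exp (-β * m))
    (hstick : ∀ ω i, Y i ω = Y (i + 1) ω → ∀ j, i ≤ j → Y j ω = Y (j + 1) ω)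
    (m : ℕ) :
    P {ω | ∃ i, m ^ 2 ≤ Y i ω} ≤ ENNReal.ofReal ((m + 1) * Real.exp (-β * m)) := by
  set run := ⋂ j ∈ Finset.range m, {ω | Y j ω < Y (j + 1) ω}
  set jump : ℕ → Set Ω := fun j => {ω | Y j ω + m ≤ Y (j + 1) ω}
  have hY : ∀ i k, i ≤ k → Measurable[ℱ k] (Y i) := fun i k hik =>
    (hadapt i).mono (ℱ.mono hik) le_rfl
  have hrun : P run ≤ ENNReal.ofReal (Real.exp (-β * m)) := by
    have := measure_biInter_range_le_pow ℱ
      (fun j => measurableSet_lt (hY j _ j.le_succ) (hY _ _ le_rfl)) hcond m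
    rwa [measure_univ, mul_one, ← ENNReal.ofReal_pow (Real.exp_nonneg _), ← Real.exp_nat_mul,
      mul_neg, mul_comm, ← neg_mul] at this
  have hjump (j : ℕ) : P (jump j) ≤ ENNReal.ofReal (Real.exp (-β * m)) := by
    simpa using measure_inter_le_of_condExp_indicator_le (ℱ.le j)
      (measurableSet_le ((hY j _ j.le_succ).add_const m) (hY _ _ le_rfl) |> ℱ.le _ _)
      MeasurableSet.univ (htail j m)
  have hcover : {ω | ∃ i, m ^ 2 ≤ Y i ω} ≤ᵐ[P] (run ∪ ⋃ j ∈ Finset.range m, jump j : Set Ω) := by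
    filter_upwards [ae_all_iff.2 hmono] with ω hω ⟨i, hi⟩
    change ω ∈ (_ ∪ _ : Set Ω)
    simpa [run, jump] using forall_lt_succ_or_exists_add_le_succ_of_sq_le (hY0 ω)
      (monotone_nat_of_le_succ hω) (hstick ω) hi
  calc P {ω | ∃ i, m ^ 2 ≤ Y i ω} ≤ P run + ∑ j ∈ Finset.range m, P (jump j) :=
        (measure_mono_ae hcover).trans <|
          (measure_union_le _ _).trans (add_le_add le_rfl (measure_biUnion_finset_le _ _))
    _ ≤ ENNReal.ofReal (Real.exp (-β * m))
        + ∑ _j ∈ Finset.range m, ENNReal.ofReal (Real.exp (-β * m)) := by gcongr; exact hjump _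
    _ = ENNReal.ofReal ((m + 1) * Real.exp (-β * m)) := by
        rw [Finset.sum_const, Finset.card_range, nsmul_eq_mul, ENNReal.ofReal_mul (by positivity),
          ENNReal.ofReal_add (Nat.cast_nonneg m) zero_le_one, ENNReal.ofReal_natCast,
          ENNReal.ofReal_one]
        ring

/-- under the hypotheses of Statement 0, together with the conditional tail
bound `P(Y (j+1) - Y j ≥ m | ℱ j) ≤ exp (-β * m)` a.s. and a.s. finiteness of
`I = inf {i | Y i = Y (i+1)}`, we have `P (Y_I ≥ m²) ≤ (m+1) exp (-β m)`.  Since the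
sequence is nondecreasing and becomes constant at time `I`, the terminal value `Y_I`
is `≥ m²` iff some `Y i` is `≥ m²`. -/
theorem stmt1 {Ω : Type*} {m0 : MeasurableSpace Ω} (P : Measure Ω) [IsProbabilityMeasure P]
    (ℱ : Filtration ℕ m0) (Y : ℕ → Ω → ℕ) (β : ℝ) (hβ : 0 < β)
    (hadapt : ∀ i, Measurable[ℱ i] (Y i))
    (hY0 : ∀ ω, Y 0 ω = 0)
    (hmono : ∀ i, ∀ᵐ ω ∂P, Y i ω ≤ Y (i + 1) ω)
    (hcond : ∀ i, ∀ᵐ ω ∂P,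
      (P[Set.indicator {ω' | Y i ω' < Y (i + 1) ω'} (fun _ => (1 : ℝ)) | ℱ i]) ω
        ≤ Real.exp (-β))
    (htail : ∀ j m, ∀ᵐ ω ∂P,
      (P[Set.indicator {ω' | Y j ω' + m ≤ Y (j + 1) ω'} (fun _ => (1 : ℝ)) | ℱ j]) ω
        ≤ Real.exp (-β * m))
    (hstick : ∀ ω i, Y i ω = Y (i + 1) ω → ∀ j, i ≤ j → Y j ω = Y (j + 1) ω)
    (hfin : ∀ᵐ ω ∂P, ∃ i, Y i ω = Y (i + 1) ω)
    (m : ℕ) :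
    P {ω | ∃ i, m ^ 2 ≤ Y i ω} ≤ ENNReal.ofReal ((m + 1) * Real.exp (-β * m)) :=
  stmt1_general P ℱ Y β hadapt hY0 hmono hcond htail hstick m
end

section
/- Suppose that for oriented percolation with parameter $p < p_c$ there exist $\beta > 0$ such that $P(\xi^{\{0\}}_n \neq \emptyset) \leq e^{-\beta n}$ for all $n$. Then for every $x \in 2\mathbb{Z}$ and every $m\in\mathbb{N}$, the probability that there exists $y > x$ with $(y,0)$ connected by an open path to the set $C_{x,0} \cap \bigcup_{j\geq m} L_j$ is at most $e^{-\beta' m}$ for some $\beta' > 0$ depending only on $\beta$. -/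
/-!
An open path from `(y, 0)` that ends in the cone `C_{x,0}` at level `k` has length `k`, and since
`y > x` it also has `2k ≥ y - x`. Translation invariance and a union bound over `y` therefore bound
the probability by `(1 - e^{-β/4})⁻¹ e^{-βm/2}`. This constant may exceed `1`, so small `m` need a
bound strictly below `1` that is uniform in `x`. It comes from the event that every bond leaving
`(u, 0)` with `x < u ≤ x + L` is closed: it has probability `(1 - p)^{2L} > 0`, it is independent
of the survival of each far site `y > x + L`, and the union bound over those sites is below `1`
once `L` is large.
-/

open MeasureTheory ProbabilityTheory

/-- A site of the plane: `(horizontal coordinate, level)`. -/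
abbrev Site : Type := ℤ × ℤ

/-- An oriented bond is determined by its bottom site and a direction
(`true` = up-right, `false` = up-left). -/
abbrev Bond : Type := Site × Bool

/-- A percolation configuration: each bond is open (`true`) or closed (`false`). -/
abbrev Config : Type := Bond → Bool

/-- The top endpoint of the bond starting at `s` with direction `d`. -/
def bondStep (s : Site) (d : Bool) : Site := (s.1 + (if d then 1 else -1), s.2 + 1)

/-- There is an open oriented path from `a` to `b` in the configuration `ω`. -/
def OpenPath (ω : Config) (a b : Site) : Prop :=
  ∃ (k : ℕ) (γ : ℕ → Site), γ 0 = a ∧ γ k = b ∧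
    ∀ i < k, ∃ d : Bool, bondStep (γ i) d = γ (i + 1) ∧ ω (γ i, d) = true

/-- The bond variables are i.i.d. Bernoulli(p) under `P`. -/
def IIDBernoulli (P : Measure Config) (p : ℝ) : Prop :=
  (∀ b : Bond, P {ω : Config | ω b = true} = ENNReal.ofReal p) ∧
    iIndepFun (fun (b : Bond) (ω : Config) => ω b) P


/-- The cone emerging from `(x, m)`: sites `(v, k)` with `k ≥ m` and `|v - x| ≤ k - m`. -/
def Cone (x m : ℤ) : Set Site := {s : Site | m ≤ s.2 ∧ |s.1 - x| ≤ s.2 - m}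

open scoped ENNReal

theorem measure_inter_eq_mul_of_dependsOn {ι : Type*} {P : Measure (ι → Bool)}
    (h : iIndepFun (fun (i : ι) (ω : ι → Bool) => ω i) P) {S T : Set ι}
    (hS : S.Finite) (hT : T.Finite) (hST : Disjoint S T) {E F : Set (ι → Bool)}
    (hE : DependsOn (· ∈ E) S) (hF : DependsOn (· ∈ F) T) :
    P (E ∩ F) = P E * P F := by
  have hind := h.indepFun_finset hS.toFinset hT.toFinset (by simpa using hST)
    (fun i => measurable_pi_apply i)
  obtain ⟨g, hg⟩ := dependsOn_iff_exists_comp.1 (hS.coe_toFinset.symm ▸ hE)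
  obtain ⟨g', hg'⟩ := dependsOn_iff_exists_comp.1 (hT.coe_toFinset.symm ▸ hF)
  have hE' : E = (fun ω (i : hS.toFinset) => ω i) ⁻¹' {z | g z} := by
    ext ω; exact Iff.of_eq (congrFun hg ω)
  have hF' : F = (fun ω (i : hT.toFinset) => ω i) ⁻¹' {z | g' z} := by
    ext ω; exact Iff.of_eq (congrFun hg' ω)
  rw [hE', hF']
  exact hind.measure_inter_preimage_eq_mul _ _ .of_discrete .of_discrete

theorem measure_preimage_comp_equiv_of_iIndepFun {ι α : Type*} [MeasurableSpace α]
    {P : Measure (ι → α)} [IsProbabilityMeasure P]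
    (h : iIndepFun (fun (i : ι) (ω : ι → α) => ω i) P)
    (hid : ∀ i j, P.map (fun ω => ω i) = P.map (fun ω => ω j)) (e : ι ≃ ι) (E : Set (ι → α)) :
    P ((fun ω => ω ∘ e) ⁻¹' E) = P E := by
  have : ∀ i, IsProbabilityMeasure (P.map fun ω : ι → α => ω i) := fun i =>
    Measure.isProbabilityMeasure_map (measurable_pi_apply i).aemeasurable
  have hP : P = Measure.infinitePi (fun i => P.map (fun ω => ω i)) := by
    simpa using h.map_fun_eq_infinitePi_map (fun i => measurable_pi_apply i)
  let τ : (ι → α) ≃ᵐ (ι → α) := MeasurableEquiv.piCongrLeft (fun _ => α) e.symm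
  have hτ : ⇑τ = fun ω => ω ∘ e := by
    ext ω i
    simp [τ, MeasurableEquiv.piCongrLeft, Equiv.piCongrLeft_apply]
  have hmap := Measure.infinitePi_map_piCongrLeft (X := fun _ => α)
    (fun i => P.map (fun ω => ω i)) e.symm
  have hμ : (fun i => P.map (fun ω : ι → α => ω (e.symm i))) = fun i => P.map (fun ω => ω i) :=
    funext fun i => hid _ _
  rw [hμ, ← hP] at hmap
  rw [← hτ, ← τ.map_apply, hmap]

theorem mul_add_one_sub_lt_one {g a : ℝ≥0∞} (hg0 : g ≠ 0) (hg1 : g ≤ 1) (ha : a < 1) :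
    g * a + (1 - g) < 1 := by
  calc g * a + (1 - g) < g * 1 + (1 - g) := by
        refine ENNReal.add_lt_add_right (ENNReal.sub_ne_top ENNReal.one_ne_top) ?_
        exact ENNReal.mul_lt_mul_right hg0 (ne_top_of_le_ne_top ENNReal.one_ne_top hg1) ha
    _ = 1 := by rw [mul_one, add_tsub_cancel_of_le hg1]

theorem exists_pos_forall_min_le_exp {δ C q : ℝ} (hδ : δ < 1) (hq0 : 0 < q) (hq1 : q < 1) :
    ∃ β' > 0, ∀ m : ℕ, min δ (C * q ^ m) ≤ Real.exp (-β' * m) := by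
  obtain ⟨δ', hδδ', hδ'0, hδ'1⟩ : ∃ δ', δ ≤ δ' ∧ 0 < δ' ∧ δ' < 1 :=
    ⟨max δ (1 / 2), le_max_left _ _, by positivity, max_lt hδ (by norm_num)⟩
  have hlogq : 0 < -Real.log q := neg_pos.2 (Real.log_neg hq0 hq1)
  have hη : 0 < -Real.log δ' := neg_pos.2 (Real.log_neg hδ'0 hδ'1)
  obtain ⟨M, hM⟩ := exists_nat_gt (2 * C / -Real.log q)
  -- For `m ≥ M` half of the decay of `q ^ m` absorbs `C`; for `m < M` the bound `δ'` suffices.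
  set β' := min (-Real.log q / 2) (-Real.log δ' / (M + 1))
  refine ⟨β', lt_min (by positivity) (by positivity), fun m => ?_⟩
  rcases le_or_gt (M : ℝ) m with hm | hm
  · have hC : C ≤ Real.exp (-Real.log q * m / 2) := by
      refine le_trans ?_ (Real.add_one_le_exp _)
      have := (div_lt_iff₀ hlogq).1 hM
      nlinarith
    calc min δ (C * q ^ m) ≤ C * q ^ m := min_le_right _ _
      _ ≤ Real.exp (-Real.log q * m / 2) * Real.exp (m * Real.log q) := by
          rw [Real.exp_nat_mul, Real.exp_log hq0]
          gcongr
      _ = Real.exp (-(-Real.log q / 2) * m) := by rw [← Real.exp_add]; ring_nf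
      _ ≤ Real.exp (-β' * m) := by
          gcongr
          exact min_le_left _ _
  · calc min δ (C * q ^ m) ≤ δ' := (min_le_left _ _).trans hδδ'
      _ = Real.exp (-(-Real.log δ' / (M + 1)) * (M + 1)) := by
          rw [neg_div, neg_neg, div_mul_cancel₀ _ (by positivity), Real.exp_log hδ'0]
      _ ≤ Real.exp (-β' * m) := by
          have : β' * m ≤ -Real.log δ' / (M + 1) * (M + 1) :=
            mul_le_mul (min_le_right _ _) (by linarith) (by positivity) (by positivity)
          exact Real.exp_le_exp.2 (by linarith)

theorem exists_pos_forall_le_exp_of_le_min {δ C ρ : ℝ≥0∞} (hδ : δ < 1) (hC : C ≠ ∞)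
    (hρ0 : ρ ≠ 0) (hρ1 : ρ < 1) :
    ∃ β' > 0, ∀ m : ℕ, ∀ a : ℝ≥0∞, a ≤ δ → a ≤ ρ ^ m * C →
      a ≤ ENNReal.ofReal (Real.exp (-β' * m)) := by
  obtain ⟨β', hβ', hmin⟩ := exists_pos_forall_min_le_exp (C := C.toReal)
    (ENNReal.toReal_lt_of_lt_ofReal (by simpa using hδ)) (ENNReal.toReal_pos hρ0 hρ1.ne_top)
    (ENNReal.toReal_lt_of_lt_ofReal (by simpa using hρ1))
  refine ⟨β', hβ', fun m a haδ haC => ?_⟩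
  rw [← ENNReal.ofReal_toReal (haδ.trans_lt (hδ.trans ENNReal.one_lt_top)).ne]
  refine ENNReal.ofReal_le_ofReal ((le_min ?_ ?_).trans (hmin m))
  · exact ENNReal.toReal_mono (hδ.trans ENNReal.one_lt_top).ne haδ
  · rw [mul_comm, ← ENNReal.toReal_pow, ← ENNReal.toReal_mul]
    exact ENNReal.toReal_mono (ENNReal.mul_ne_top (ENNReal.pow_ne_top hρ1.ne_top) hC) haC

theorem exists_pow_mul_lt_one {ρ C : ℝ≥0∞} (hρ : ρ < 1) (hC : C ≠ ∞) :
    ∃ L : ℕ, ρ ^ L * C < 1 := by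
  have := ENNReal.Tendsto.mul_const (ENNReal.tendsto_pow_atTop_nhds_zero_of_lt_one hρ) (Or.inr hC)
  rw [zero_mul] at this
  exact (this.eventually (gt_mem_nhds zero_lt_one)).exists

theorem bondStep_add (s c : Site) (d : Bool) : bondStep (s + c) d = bondStep s d + c := by
  simp only [bondStep, Prod.fst_add, Prod.snd_add]
  congr 1 <;> ring

theorem snd_eq_and_abs_fst_sub_le_of_steps {γ : ℕ → Site} {k : ℕ}
    (hγ : ∀ i < k, ∃ d, bondStep (γ i) d = γ (i + 1)) {i : ℕ} (hi : i ≤ k) :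
    (γ i).2 = (γ 0).2 + i ∧ |(γ i).1 - (γ 0).1| ≤ i := by
  induction i with
  | zero => simp
  | succ i ih =>
    obtain ⟨d, hd⟩ := hγ i hi
    rw [← hd]
    obtain ⟨h2, h1⟩ := ih (by omega)
    rw [abs_le] at h1 ⊢
    cases d <;> simp only [bondStep] <;> push_cast <;> omega

namespace OpenPath

variable {ω : Config} {a b : Site}

theorem exists_length (h : OpenPath ω a b) : ∃ n : ℕ, b.2 = a.2 + n ∧ |b.1 - a.1| ≤ n := by
  obtain ⟨k, γ, rfl, rfl, hγ⟩ := h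
  exact ⟨k, snd_eq_and_abs_fst_sub_le_of_steps (fun i hi => (hγ i hi).imp fun _ => And.left)
    le_rfl⟩

theorem exists_of_le (h : OpenPath ω a b) {j : ℕ} (hj : a.2 + j ≤ b.2) :
    ∃ c, OpenPath ω a (c, a.2 + j) := by
  obtain ⟨k, γ, rfl, rfl, hγ⟩ := h
  have hsteps := fun i hi => (hγ i hi).imp fun _ => And.left
  have hjk : j ≤ k := by
    have := (snd_eq_and_abs_fst_sub_le_of_steps hsteps le_rfl).1
    omega
  refine ⟨(γ j).1, j, γ, rfl, ?_, fun i hi => hγ i (by omega)⟩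
  rw [← (snd_eq_and_abs_fst_sub_le_of_steps hsteps hjk).1]

theorem exists_open_bond (h : OpenPath ω a b) (hab : a ≠ b) : ∃ d, ω (a, d) = true := by
  obtain ⟨k, γ, rfl, rfl, hγ⟩ := h
  obtain _ | k := k
  · exact absurd rfl hab
  · exact (hγ 0 k.succ_pos).imp fun _ => And.right

theorem translate (h : OpenPath ω a b) (c : Site) :
    OpenPath (fun e : Bond => ω (e.1 + c, e.2)) (a - c) (b - c) := by
  obtain ⟨k, γ, rfl, rfl, hγ⟩ := h
  refine ⟨k, fun i => γ i - c, rfl, rfl, fun i hi => ?_⟩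
  obtain ⟨d, hd, hopen⟩ := hγ i hi
  refine ⟨d, ?_, by simpa using hopen⟩
  simp only [sub_eq_add_neg, bondStep_add, hd]

theorem of_agree {ω' : Config} (h : OpenPath ω a b)
    (hω : ∀ e : Bond, e.1 ∈ Cone a.1 a.2 → e.1.2 < b.2 → ω e = ω' e) : OpenPath ω' a b := by
  obtain ⟨k, γ, rfl, rfl, hγ⟩ := h
  have hsteps := fun i hi => (hγ i hi).imp fun _ => And.left
  refine ⟨k, γ, rfl, rfl, fun i hi => ?_⟩
  obtain ⟨d, hd, hopen⟩ := hγ i hi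
  obtain ⟨hi2, hi1⟩ := snd_eq_and_abs_fst_sub_le_of_steps hsteps hi.le
  have hk2 := (snd_eq_and_abs_fst_sub_le_of_steps hsteps le_rfl).1
  have hcone : γ i ∈ Cone (γ 0).1 (γ 0).2 := ⟨by omega, by omega⟩
  exact ⟨d, hd, hω (γ i, d) hcone (show (γ i).2 < (γ k).2 by omega) ▸ hopen⟩

end OpenPath

def survival (y : ℤ) (n : ℕ) : Set Config := {ω | ∃ v : ℤ, OpenPath ω (y, 0) (v, n)}

def coneBonds (y : ℤ) (n : ℕ) : Set Bond := {e | e.1 ∈ Cone y 0 ∧ e.1.2 < n}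

theorem survival_anti (y : ℤ) {j n : ℕ} (hjn : j ≤ n) : survival y n ⊆ survival y j := by
  rintro ω ⟨v, hv⟩
  obtain ⟨c, hc⟩ := hv.exists_of_le (j := j) (by simpa using hjn)
  exact ⟨c, by simpa using hc⟩

theorem finite_coneBonds (y : ℤ) (n : ℕ) : (coneBonds y n).Finite := by
  refine (((Set.finite_Icc (y - n) (y + n)).prod (Set.finite_Icc (0 : ℤ) n)).prod
    (Set.finite_univ (α := Bool))).subset ?_
  rintro ⟨⟨u, i⟩, d⟩ ⟨⟨hi, hu⟩, hin⟩
  simp only [abs_le] at hu hi hin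
  simp only [Set.mem_prod, Set.mem_Icc, Set.mem_univ, and_true]
  omega

theorem dependsOn_survival (y : ℤ) (n : ℕ) :
    DependsOn (· ∈ survival y n) (coneBonds y n) := by
  intro ω ω' hagree
  refine propext ⟨fun ⟨v, hv⟩ => ⟨v, hv.of_agree fun e he hlt => hagree e ⟨he, hlt⟩⟩,
    fun ⟨v, hv⟩ => ⟨v, hv.of_agree fun e he hlt => (hagree e ⟨he, hlt⟩).symm⟩⟩

def allClosed (S : Finset Bond) : Set Config := {ω | ∀ e ∈ S, ω e = false}

theorem dependsOn_allClosed (S : Finset Bond) : DependsOn (· ∈ allClosed S) (S : Set Bond) := by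
  intro ω ω' hagree
  refine propext (forall₂_congr fun e he => ?_)
  rw [hagree e he]

theorem measurableSet_allClosed (S : Finset Bond) : MeasurableSet (allClosed S) := by
  have : allClosed S = ⋂ e ∈ S, (fun ω : Config => ω e) ⁻¹' {false} := by
    ext ω; simp [allClosed]
  rw [this]
  exact S.measurableSet_biInter fun e _ => measurable_pi_apply e (measurableSet_singleton _)

noncomputable def blockBonds (x : ℤ) (L : ℕ) : Finset Bond :=
  (Finset.Ioc x (x + L) ×ˢ {0}) ×ˢ Finset.univ

theorem card_blockBonds (x : ℤ) (L : ℕ) : (blockBonds x L).card = 2 * L := by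
  simp [blockBonds, mul_comm]

theorem disjoint_blockBonds_coneBonds {x y : ℤ} {L : ℕ} (hy : x + L < y) (n : ℕ) :
    Disjoint (blockBonds x L : Set Bond) (coneBonds y n) := by
  rw [Set.disjoint_left]
  rintro ⟨⟨u, i⟩, d⟩ hblock ⟨⟨-, hu⟩, -⟩
  dsimp only at hu
  simp only [blockBonds, Finset.coe_product, Set.mem_prod, Finset.coe_Ioc, Set.mem_Ioc,
    Finset.coe_singleton, Set.mem_singleton_iff] at hblock
  rw [abs_le] at hu
  omega

def coneEntry (x : ℤ) (m : ℕ) : Set Config :=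
  {ω | ∃ y > x, ∃ v k : ℤ, (m : ℤ) ≤ k ∧ (v, k) ∈ Cone x 0 ∧ OpenPath ω (y, 0) (v, k)}

theorem coneEntry_inter_allClosed_subset (x : ℤ) (m L : ℕ) :
    coneEntry x m ∩ allClosed (blockBonds x L) ⊆
      ⋃ t : ℕ, survival (x + L + 1 + t) (max m ((L + t) / 2 + 1)) := by
  rintro ω ⟨⟨y, hy, v, k, hmk, ⟨-, hvx⟩, hpath⟩, hclosed⟩
  obtain ⟨n, hkn, hvy⟩ := hpath.exists_length
  simp only [zero_add] at hkn hvy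
  subst hkn
  rw [abs_le] at hvx hvy
  have hyL : x + L < y := by
    by_contra! hyL
    obtain ⟨d, hd⟩ := hpath.exists_open_bond fun h => by
      simp only [Prod.mk.injEq] at h
      omega
    have hblock : ((y, 0), d) ∈ blockBonds x L := by
      simp only [blockBonds, Finset.mem_product, Finset.mem_Ioc, Finset.mem_singleton,
        Finset.mem_univ, and_true]
      omega
    simp [hclosed _ hblock] at hd
  obtain ⟨t, rfl⟩ : ∃ t : ℕ, y = x + L + 1 + t := ⟨(y - x - L - 1).toNat, by omega⟩
  -- `y - x ≤ |y - v| + |v - x| ≤ 2n`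
  refine Set.mem_iUnion.2 ⟨t, survival_anti _ ?_ ⟨v, hpath⟩⟩
  omega

section Probability

variable {P : Measure Config} [IsProbabilityMeasure P] {p : ℝ}

theorem IIDBernoulli.map_eval_eq (h : IIDBernoulli P p) (e e' : Bond) :
    P.map (fun ω => ω e) = P.map (fun ω => ω e') := by
  have : ∀ e : Bond, IsProbabilityMeasure (P.map fun ω : Config => ω e) := fun e =>
    Measure.isProbabilityMeasure_map (measurable_pi_apply e).aemeasurable
  have htrue : ∀ e : Bond, P.map (fun ω => ω e) {true} = ENNReal.ofReal p := fun e => by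
    rw [Measure.map_apply (measurable_pi_apply e) (measurableSet_singleton _)]
    exact h.1 e
  refine Measure.ext_iff_singleton.2 fun v => ?_
  cases v
  · rw [show ({false} : Set Bool) = {true}ᶜ by ext v; simp,
      prob_compl_eq_one_sub (measurableSet_singleton _),
      prob_compl_eq_one_sub (measurableSet_singleton _), htrue, htrue]
  · rw [htrue, htrue]

theorem IIDBernoulli.measure_closed (h : IIDBernoulli P p) (e : Bond) :
    P {ω | ω e = false} = 1 - ENNReal.ofReal p := by
  have hmeas : MeasurableSet {ω : Config | ω e = true} :=
    measurableSet_eq_fun (measurable_pi_apply e) measurable_const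
  rw [← h.1 e, ← prob_compl_eq_one_sub hmeas]
  congr 1
  ext ω
  simp

theorem IIDBernoulli.measure_allClosed (h : IIDBernoulli P p) (S : Finset Bond) :
    P (allClosed S) = (1 - ENNReal.ofReal p) ^ S.card := by
  have : allClosed S = ⋂ e ∈ S, {ω : Config | ω e = false} := by
    ext ω; simp [allClosed]
  rw [this, h.2.meas_biInter (s := fun e => {ω : Config | ω e = false})
    fun e _ => ⟨{false}, measurableSet_singleton _, rfl⟩]
  exact Finset.prod_eq_pow_card fun e _ => h.measure_closed e

theorem IIDBernoulli.measure_survival_le_survival_zero (h : IIDBernoulli P p) (y : ℤ) (n : ℕ) :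
    P (survival y n) ≤ P (survival 0 n) := by
  let shift : Bond ≃ Bond := (Equiv.addRight ((y, 0) : Site)).prodCongr (Equiv.refl Bool)
  calc P (survival y n) ≤ P ((fun ω => ω ∘ shift) ⁻¹' survival 0 n) := by
        refine measure_mono fun ω ⟨v, hv⟩ => ⟨v - y, ?_⟩
        have := hv.translate (y, 0)
        simp only [Prod.mk_sub_mk, sub_self] at this
        exact this
    _ = P (survival 0 n) := measure_preimage_comp_equiv_of_iIndepFun h.2 h.map_eval_eq _ _

theorem IIDBernoulli.measure_coneEntry_inter_allClosed_le (h : IIDBernoulli P p) {ρ : ℝ≥0∞}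
    (hρ : ρ ≤ 1) (hsurv : ∀ n : ℕ, P (survival 0 n) ≤ ρ ^ (4 * n)) (x : ℤ) (m L : ℕ) :
    P (coneEntry x m ∩ allClosed (blockBonds x L)) ≤
      P (allClosed (blockBonds x L)) * (ρ ^ (2 * m + L) * (1 - ρ)⁻¹) := by
  set G := allClosed (blockBonds x L)
  calc P (coneEntry x m ∩ G)
      ≤ ∑' t : ℕ, P (G ∩ survival (x + L + 1 + t) (max m ((L + t) / 2 + 1))) := by
        refine (measure_mono fun ω hω => ?_).trans (measure_iUnion_le _)
        obtain ⟨t, ht⟩ := Set.mem_iUnion.1 (coneEntry_inter_allClosed_subset x m L hω)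
        exact Set.mem_iUnion.2 ⟨t, hω.2, ht⟩
    _ = ∑' t : ℕ, P G * P (survival (x + L + 1 + t) (max m ((L + t) / 2 + 1))) := by
        refine tsum_congr fun t => measure_inter_eq_mul_of_dependsOn h.2
          (blockBonds x L).finite_toSet (finite_coneBonds _ _)
          (disjoint_blockBonds_coneBonds (by omega) _) (dependsOn_allClosed _)
          (dependsOn_survival _ _)
    _ ≤ ∑' t : ℕ, P G * (ρ ^ (2 * m + L) * ρ ^ t) := by
        gcongr with t
        calc _ ≤ P (survival 0 _) := h.measure_survival_le_survival_zero _ _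
          _ ≤ ρ ^ (4 * _) := hsurv _
          _ ≤ _ := by
            rw [← pow_add]
            exact pow_le_pow_right_of_le_one' hρ (by omega)
    _ = P G * (ρ ^ (2 * m + L) * (1 - ρ)⁻¹) := by
        rw [ENNReal.tsum_mul_left, ENNReal.tsum_mul_left, ENNReal.tsum_geometric]

theorem IIDBernoulli.measure_coneEntry_le (h : IIDBernoulli P p) {ρ : ℝ≥0∞}
    (hρ : ρ ≤ 1) (hsurv : ∀ n : ℕ, P (survival 0 n) ≤ ρ ^ (4 * n)) (x : ℤ) (m L : ℕ) :
    P (coneEntry x m) ≤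
      (1 - ENNReal.ofReal p) ^ (2 * L) * (ρ ^ (2 * m + L) * (1 - ρ)⁻¹) +
        (1 - (1 - ENNReal.ofReal p) ^ (2 * L)) := by
  have hG : P (allClosed (blockBonds x L)) = (1 - ENNReal.ofReal p) ^ (2 * L) := by
    rw [h.measure_allClosed, card_blockBonds]
  calc P (coneEntry x m)
      ≤ P (coneEntry x m ∩ allClosed (blockBonds x L)) +
          P (coneEntry x m \ allClosed (blockBonds x L)) := measure_le_inter_add_sdiff _ _ _
    _ ≤ _ := by
        gcongr
        · exact hG ▸ h.measure_coneEntry_inter_allClosed_le hρ hsurv x m L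
        · rw [← hG, ← prob_compl_eq_one_sub (measurableSet_allClosed _)]
          exact measure_mono (Set.sdiff_subset_compl _ _)

end Probability

theorem stmt7_general (p : ℝ) (hp1 : p < 1)
    (P : Measure Config) [IsProbabilityMeasure P] (hiid : IIDBernoulli P p)
    (β : ℝ) (hβ : 0 < β)
    (hdecay : ∀ n : ℕ,
      P {ω : Config | ∃ y : ℤ, OpenPath ω (0, 0) (y, (n : ℤ))}
        ≤ ENNReal.ofReal (Real.exp (-β * n))) :
    ∃ β' > (0 : ℝ), ∀ x : ℤ, Even x → ∀ m : ℕ,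
      P {ω : Config | ∃ y > x, ∃ v k : ℤ, (m : ℤ) ≤ k ∧ (v, k) ∈ Cone x 0 ∧
          OpenPath ω (y, 0) (v, k)}
        ≤ ENNReal.ofReal (Real.exp (-β' * m)) := by
  change ∃ β' > (0 : ℝ), ∀ x : ℤ, Even x → ∀ m : ℕ,
    P (coneEntry x m) ≤ ENNReal.ofReal (Real.exp (-β' * m))
  set ρ := ENNReal.ofReal (Real.exp (-β / 4))
  have hρ0 : ρ ≠ 0 := (ENNReal.ofReal_pos.2 (Real.exp_pos _)).ne'
  have hρ1 : ρ < 1 := ENNReal.ofReal_lt_one.2 (Real.exp_lt_one_iff.2 (by linarith))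
  have hsurv (n : ℕ) : P (survival 0 n) ≤ ρ ^ (4 * n) := by
    refine (hdecay n).trans_eq ?_
    rw [← ENNReal.ofReal_pow (Real.exp_nonneg _), ← Real.exp_nat_mul]
    push_cast
    ring_nf
  have hC : (1 - ρ)⁻¹ ≠ ∞ := ENNReal.inv_ne_top.2 (tsub_pos_of_lt hρ1).ne'
  obtain ⟨L, hL⟩ := exists_pow_mul_lt_one hρ1 hC
  set g := (1 - ENNReal.ofReal p) ^ (2 * L)
  have hg0 : g ≠ 0 := pow_ne_zero _ (tsub_pos_of_lt (ENNReal.ofReal_lt_one.2 hp1)).ne'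
  obtain ⟨β', hβ', hexp⟩ := exists_pos_forall_le_exp_of_le_min
    (mul_add_one_sub_lt_one hg0 (pow_le_one₀ zero_le tsub_le_self) hL) hC
    (pow_ne_zero 2 hρ0) (pow_lt_one₀ zero_le hρ1 two_ne_zero)
  refine ⟨β', hβ', fun x _ m => hexp m _ ?_ ?_⟩
  · refine (hiid.measure_coneEntry_le hρ1.le hsurv x m L).trans ?_
    gcongr g * (?_ * _) + _
    exact pow_le_pow_right_of_le_one' hρ1.le (Nat.le_add_left _ _)
  · simpa [g, pow_mul] using hiid.measure_coneEntry_le hρ1.le hsurv x m 0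

/-- Lemma 3.1: if the survival probability from a single site decays
exponentially, `P(ξ⁰_n ≠ ∅) ≤ exp (-β n)`, then there is `β' > 0` (depending only on `β`,
i.e. chosen uniformly in `x` and `m`) such that the probability that some site `(y,0)` with
`y > x` is connected to `C_{x,0} ∩ ⋃_{j ≥ m} L_j` is at most `exp (-β' m)`. -/
theorem stmt7 (p : ℝ) (hp0 : 0 < p) (hp1 : p < 1)
    (P : Measure Config) [IsProbabilityMeasure P] (hiid : IIDBernoulli P p)
    (β : ℝ) (hβ : 0 < β)
    (hdecay : ∀ n : ℕ,
      P {ω : Config | ∃ y : ℤ, OpenPath ω (0, 0) (y, (n : ℤ))}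
        ≤ ENNReal.ofReal (Real.exp (-β * n))) :
    ∃ β' > (0 : ℝ), ∀ x : ℤ, Even x → ∀ m : ℕ,
      P {ω : Config | ∃ y > x, ∃ v k : ℤ, (m : ℤ) ≤ k ∧ (v, k) ∈ Cone x 0 ∧
          OpenPath ω (y, 0) (v, k)}
        ≤ ENNReal.ofReal (Real.exp (-β' * m)) :=
  stmt7_general p hp1 P hiid β hβ hdecay
end

section
/- Let $\gamma$ be a fixed oriented path in $\Lambda$ from $(x,r)$ to level $L_n$, and let $\Gamma_r$ denote the rightmost open path from $(x,r)$ to $L_n$ (when one exists). Then the event $\{\Gamma_r = \gamma\}$ equals the intersection of the event $\{\gamma \text{ is open}\}$ with a decreasing event $D(\gamma)$ measurable with respect to the bonds of the graph $A_{\gamma,r}$ consisting of bonds between levels $r$ and $n$ having at least one endpoint strictly to the right of $\gamma$. -/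
open MeasureTheory ProbabilityTheory

/-- `γ` describes an oriented path in `Λ` starting at `(x, r)` and ending at level `n`:
`γ i` is the horizontal position at level `r + i`, for `0 ≤ i ≤ n - r`. -/
def IsPathFrom (x : ℤ) (r n : ℕ) (γ : ℕ → ℤ) : Prop :=
  γ 0 = x ∧ ∀ i < n - r, γ (i + 1) - γ i = 1 ∨ γ (i + 1) - γ i = -1

/-- All the bonds of the path `γ` (from level `r` to level `n`) are open in `ω`. -/
def PathOpen (ω : Config) (r n : ℕ) (γ : ℕ → ℤ) : Prop :=
  ∀ i < n - r, ∃ d : Bool,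
    bondStep (γ i, (r : ℤ) + i) d = (γ (i + 1), (r : ℤ) + i + 1) ∧
      ω ((γ i, (r : ℤ) + i), d) = true

/-- The site `s` lies in levels `r,…,n` strictly to the right of the path `γ`. -/
def StrictRight (γ : ℕ → ℤ) (r n : ℕ) (s : Site) : Prop :=
  (r : ℤ) ≤ s.2 ∧ s.2 ≤ (n : ℤ) ∧ γ (s.2 - r).toNat < s.1

/-- The graph `A_{γ,r}`: bonds with both endpoints in levels `r,…,n`, at least one of
which lies strictly to the right of `γ`. -/
def rightBonds (γ : ℕ → ℤ) (r n : ℕ) : Set Bond :=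
  {b : Bond | (r : ℤ) ≤ b.1.2 ∧ (bondStep b.1 b.2).2 ≤ (n : ℤ) ∧
    (StrictRight γ r n b.1 ∨ StrictRight γ r n (bondStep b.1 b.2))}

/-- The event `D` depends only on the states of the bonds in `Bs`. -/
def DependsOnlyOn (D : Set Config) (Bs : Set Bond) : Prop :=
  ∀ ω ω' : Config, (∀ b ∈ Bs, ω b = ω' b) → (ω ∈ D ↔ ω' ∈ D)

/-- The event `D` is decreasing: closed under switching bonds from open to closed. -/
def DecreasingEvent (D : Set Config) : Prop :=
  ∀ ω ω' : Config, ω ∈ D → (∀ b, ω' b ≤ ω b) → ω' ∈ D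

/-- `γ` is the rightmost open path from `(x, r)` to level `n` in `ω`: it is open, and any
open path from `(x, r)` to level `n` lies weakly to its left at every level. -/
def IsRightmostOpenPath (ω : Config) (x : ℤ) (r n : ℕ) (γ : ℕ → ℤ) : Prop :=
  IsPathFrom x r n γ ∧ PathOpen ω r n γ ∧
    ∀ γ' : ℕ → ℤ, IsPathFrom x r n γ' → PathOpen ω r n γ' →
      ∀ i ≤ n - r, γ' i ≤ γ i

/-!
If `γ` is open, it is the rightmost open path exactly when no other open path from `(x, r)`
stays weakly to its right: the pointwise maximum of `γ` and any open path `γ'` is again an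
open path, since two paths from the same site have the same parity and so can only cross at
a common site. A path weakly to the right of `γ` uses only bonds of `γ` and of `A_{γ,r}`;
declaring the bonds of `γ` open turns the condition into an event depending on `A_{γ,r}`
alone, and it is decreasing because closing bonds only removes paths.
-/

lemma bondStep_injective (s : Site) : Function.Injective (bondStep s) := by
  intro d d' h
  cases d <;> cases d' <;> simp_all [bondStep]

def pathBonds (γ : ℕ → ℤ) (r n : ℕ) : Set Bond :=
  {b | ∃ i < n - r, b.1 = (γ i, (r : ℤ) + i) ∧ bondStep b.1 b.2 = (γ (i + 1), (r : ℤ) + i + 1)}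

open Classical in
noncomputable def openOn (S : Set Bond) (ω : Config) : Config :=
  fun b => if b ∈ S then true else ω b

section openOn

variable {S T : Set Bond} {ω ω' : Config}

lemma openOn_eq_self (h : ∀ b ∈ S, ω b = true) : openOn S ω = ω := by
  funext b
  by_cases hb : b ∈ S <;> simp [openOn, hb, h]

lemma openOn_mono (h : ∀ b, ω' b ≤ ω b) (b : Bond) : openOn S ω' b ≤ openOn S ω b := by
  by_cases hb : b ∈ S <;> simp [openOn, hb, h]

lemma openOn_congr (h : ∀ b ∈ T, ω b = ω' b) {b : Bond} (hb : b ∈ S ∪ T) :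
    openOn S ω b = openOn S ω' b := by
  by_cases hbS : b ∈ S
  · simp [openOn, hbS]
  · simp [openOn, hbS, h b (hb.resolve_left hbS)]

end openOn

section paths

variable {x : ℤ} {r n : ℕ} {γ γ' : ℕ → ℤ} {ω ω' : Config}

lemma PathOpen.mono (h : PathOpen ω r n γ) (hle : ∀ b, ω b ≤ ω' b) : PathOpen ω' r n γ := by
  intro i hi
  obtain ⟨d, hd, hopen⟩ := h i hi
  exact ⟨d, hd, Bool.le_iff_imp.mp (hle _) hopen⟩

lemma PathOpen.congr (h : PathOpen ω r n γ)
    (hagree : ∀ i < n - r, ∀ d, bondStep (γ i, (r : ℤ) + i) d = (γ (i + 1), (r : ℤ) + i + 1) →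
      ω ((γ i, (r : ℤ) + i), d) = ω' ((γ i, (r : ℤ) + i), d)) :
    PathOpen ω' r n γ := by
  intro i hi
  obtain ⟨d, hd, hopen⟩ := h i hi
  exact ⟨d, hd, hagree i hi d hd ▸ hopen⟩

lemma PathOpen.eq_true_of_mem_pathBonds (h : PathOpen ω r n γ) {b : Bond}
    (hb : b ∈ pathBonds γ r n) : ω b = true := by
  obtain ⟨s, d⟩ := b
  obtain ⟨i, hi, hs, hd⟩ := hb
  dsimp only at hs hd
  subst hs
  obtain ⟨d', hd', hopen⟩ := h i hi
  rwa [bondStep_injective _ (hd.trans hd'.symm)]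

lemma mem_pathBonds_union_rightBonds (hge : ∀ i ≤ n - r, γ i ≤ γ' i) {i : ℕ} (hi : i < n - r)
    {d : Bool} (hd : bondStep (γ' i, (r : ℤ) + i) d = (γ' (i + 1), (r : ℤ) + i + 1)) :
    ((γ' i, (r : ℤ) + i), d) ∈ pathBonds γ r n ∪ rightBonds γ r n := by
  by_cases hon : γ' i = γ i ∧ γ' (i + 1) = γ (i + 1)
  · exact Or.inl ⟨i, hi, by rw [hon.1], by rw [hd, hon.2]⟩
  · right
    have hlevel : ((r : ℤ) + i - r).toNat = i := by omega
    have hlevel' : ((r : ℤ) + i + 1 - r).toNat = i + 1 := by omega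
    have hge₀ := hge i hi.le
    have hge₁ := hge (i + 1) hi
    simp only [rightBonds, Set.mem_ofPred_eq, StrictRight, hd, hlevel, hlevel']
    omega

lemma IsPathFrom.two_dvd_sub (hγ : IsPathFrom x r n γ) (hγ' : IsPathFrom x r n γ') :
    ∀ i ≤ n - r, (2 : ℤ) ∣ γ i - γ' i := by
  intro i
  induction i with
  | zero => simp [hγ.1, hγ'.1]
  | succ i ih =>
    intro hi
    have := ih (by omega)
    have := hγ.2 i hi
    have := hγ'.2 i hi
    omega

/-- Having equal parity at every level (`two_dvd_sub`), the two paths cannot cross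
without meeting. -/
lemma IsPathFrom.max_step_eq_or (hγ : IsPathFrom x r n γ) (hγ' : IsPathFrom x r n γ')
    {i : ℕ} (hi : i < n - r) :
    (max (γ i) (γ' i) = γ i ∧ max (γ (i + 1)) (γ' (i + 1)) = γ (i + 1)) ∨
      (max (γ i) (γ' i) = γ' i ∧ max (γ (i + 1)) (γ' (i + 1)) = γ' (i + 1)) := by
  have := hγ.two_dvd_sub hγ' i hi.le
  have := hγ.2 i hi
  have := hγ'.2 i hi
  omega

lemma IsPathFrom.max (hγ : IsPathFrom x r n γ) (hγ' : IsPathFrom x r n γ') :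
    IsPathFrom x r n (fun i => max (γ i) (γ' i)) := by
  refine ⟨by simp [hγ.1, hγ'.1], fun i hi => ?_⟩
  rcases hγ.max_step_eq_or hγ' hi with ⟨h₀, h₁⟩ | ⟨h₀, h₁⟩ <;> simp only [h₀, h₁]
  exacts [hγ.2 i hi, hγ'.2 i hi]

lemma PathOpen.max (hγ : IsPathFrom x r n γ) (hγ' : IsPathFrom x r n γ')
    (ho : PathOpen ω r n γ) (ho' : PathOpen ω r n γ') :
    PathOpen ω r n (fun i => max (γ i) (γ' i)) := by
  intro i hi
  rcases hγ.max_step_eq_or hγ' hi with ⟨h₀, h₁⟩ | ⟨h₀, h₁⟩ <;> simp only [h₀, h₁]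
  exacts [ho i hi, ho' i hi]

end paths

/-- The event `D(γ)`. The bonds of `γ` are declared open so that it depends on the bonds
of `A_{γ,r}` alone. -/
def noPathRightOf (x : ℤ) (r n : ℕ) (γ : ℕ → ℤ) : Set Config :=
  {ω | ∀ γ', IsPathFrom x r n γ' → (∀ i ≤ n - r, γ i ≤ γ' i) →
    PathOpen (openOn (pathBonds γ r n) ω) r n γ' → ∀ i ≤ n - r, γ' i ≤ γ i}

section noPathRightOf

variable {x : ℤ} {r n : ℕ} {γ : ℕ → ℤ}

lemma dependsOnlyOn_noPathRightOf :
    DependsOnlyOn (noPathRightOf x r n γ) (rightBonds γ r n) := by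
  suffices h : ∀ ω ω' : Config, (∀ b ∈ rightBonds γ r n, ω b = ω' b) →
      ω ∈ noPathRightOf x r n γ → ω' ∈ noPathRightOf x r n γ from
    fun ω ω' hagree => ⟨h ω ω' hagree, h ω' ω fun b hb => (hagree b hb).symm⟩
  intro ω ω' hagree hω γ' hγ' hge hopen
  refine hω γ' hγ' hge (hopen.congr fun i hi d hd => ?_)
  exact openOn_congr (fun b hb => (hagree b hb).symm) (mem_pathBonds_union_rightBonds hge hi hd)

lemma decreasingEvent_noPathRightOf : DecreasingEvent (noPathRightOf x r n γ) :=
  fun _ _ hω hle γ' hγ' hge hopen => hω γ' hγ' hge (hopen.mono (openOn_mono hle))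

lemma isRightmostOpenPath_iff (hγ : IsPathFrom x r n γ) (ω : Config) :
    IsRightmostOpenPath ω x r n γ ↔ PathOpen ω r n γ ∧ ω ∈ noPathRightOf x r n γ := by
  constructor
  · rintro ⟨-, hopen, hright⟩
    refine ⟨hopen, fun γ' hγ' _ hopen' => hright γ' hγ' ?_⟩
    rwa [openOn_eq_self fun b => hopen.eq_true_of_mem_pathBonds] at hopen'
  · rintro ⟨hopen, hD⟩
    refine ⟨hγ, hopen, fun γ' hγ' hopen' i hi => ?_⟩
    have hmax := hD _ (hγ.max hγ') (fun j _ => le_max_left _ _) (by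
      rw [openOn_eq_self fun b => hopen.eq_true_of_mem_pathBonds]
      exact hopen.max hγ hγ' hopen')
    exact (le_max_right _ _).trans (hmax i hi)

end noPathRightOf

theorem stmt9_general (x : ℤ) (r n : ℕ) (γ : ℕ → ℤ) (hγ : IsPathFrom x r n γ) :
    ∃ D : Set Config, DependsOnlyOn D (rightBonds γ r n) ∧ DecreasingEvent D ∧
      ∀ ω : Config, IsRightmostOpenPath ω x r n γ ↔ (PathOpen ω r n γ ∧ ω ∈ D) :=
  ⟨noPathRightOf x r n γ, dependsOnlyOn_noPathRightOf, decreasingEvent_noPathRightOf,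
    isRightmostOpenPath_iff hγ⟩

/-- for a fixed path `γ` from `(x, r)` to level `n`, the event
`{Γ_r = γ}` (that `γ` is the rightmost open path from `(x, r)` to `L_n`) is the
intersection of `{γ is open}` with a decreasing event `D(γ)` depending only on the
bonds of `A_{γ,r}`. -/
theorem stmt9 (x : ℤ) (r n : ℕ) (hrn : r ≤ n) (γ : ℕ → ℤ) (hγ : IsPathFrom x r n γ) :
    ∃ D : Set Config, DependsOnlyOn D (rightBonds γ r n) ∧ DecreasingEvent D ∧
      ∀ ω : Config, IsRightmostOpenPath ω x r n γ ↔ (PathOpen ω r n γ ∧ ω ∈ D) :=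
  stmt9_general x r n γ hγ
end
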